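/- arXiv:2004.14177 — 2 statements merged into one kernel-verified Lean document; each statement's English description precedes it below -/
import Mathlib

section
/- Let α ∈ (0,1), λ > 0, and define the Mittag-Leffler function f(x) = ∑_{k≥0} (-λ x^α)^k / Γ(αk + 1) for x ≥ 0. Then the Laplace transform of f satisfies ∫₀^∞ e^{-sx} f(x) dx = s^{α-1}/(λ + s^α) for all s > λ^{1/α}. -/
/-!
Integrate the Mittag-Leffler series term by term: by the Gamma integral, the Laplace
transform of `(z x^α)^k / Γ(αk + 1)` is `s⁻¹ (z / s^α)^k`. Taking absolute values only
replaces `z` by `|z|`, so for `|z| < s^α` the integrals of the norms form a convergent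
geometric series, which justifies the interchange of sum and integral; summing the
geometric series gives `s^(α-1) / (s^α - z)`.
-/

open MeasureTheory Real Set

noncomputable def mittagLefflerTerm (α z x : ℝ) (k : ℕ) : ℝ :=
  (z * x ^ α) ^ k / Gamma (α * k + 1)

namespace mittagLefflerTerm

variable {α z x : ℝ} {k : ℕ}

lemma eq_mul_rpow (hx : 0 ≤ x) :
    mittagLefflerTerm α z x k = z ^ k / Gamma (α * k + 1) * x ^ (α * k) := by
  rw [mittagLefflerTerm, mul_pow, ← rpow_natCast (x ^ α), ← rpow_mul hx]
  ring

lemma abs_eq (hα : 0 ≤ α) (hx : 0 ≤ x) :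
    |mittagLefflerTerm α z x k| = mittagLefflerTerm α |z| x k := by
  rw [mittagLefflerTerm, mittagLefflerTerm, abs_div, abs_pow, abs_mul,
    abs_of_nonneg (rpow_nonneg hx α), abs_of_pos (Gamma_pos_of_pos (by positivity))]

end mittagLefflerTerm

lemma integrableOn_rpow_mul_exp_neg_mul_Ioi {β s : ℝ} (hβ : -1 < β) (hs : 0 < s) :
    IntegrableOn (fun x ↦ x ^ β * exp (-(s * x))) (Ioi 0) := by
  have hΓ := Gamma_pos_of_pos (show 0 < β + 1 by linarith)
  have h := integral_rpow_mul_exp_neg_mul_Ioi (a := β + 1) (by linarith) hs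
  rw [add_sub_cancel_right] at h
  exact .of_integral_ne_zero (by rw [h]; positivity)

section Laplace

variable {α s : ℝ}

lemma integrableOn_exp_neg_mul_mittagLefflerTerm (hα : 0 ≤ α) (hs : 0 < s) (z : ℝ) (k : ℕ) :
    IntegrableOn (fun x ↦ exp (-s * x) * mittagLefflerTerm α z x k) (Ioi 0) := by
  have hβ : -1 < α * k := by linarith [show 0 ≤ α * k by positivity]
  refine IntegrableOn.congr_fun ((integrableOn_rpow_mul_exp_neg_mul_Ioi hβ hs).const_mul
    (z ^ k / Gamma (α * k + 1))) (fun x hx ↦ ?_) measurableSet_Ioi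
  rw [mittagLefflerTerm.eq_mul_rpow (le_of_lt hx), neg_mul]
  ring

lemma integral_exp_neg_mul_mittagLefflerTerm (hα : 0 ≤ α) (hs : 0 < s) (z : ℝ) (k : ℕ) :
    ∫ x in Ioi 0, exp (-s * x) * mittagLefflerTerm α z x k = s⁻¹ * (z / s ^ α) ^ k := by
  have hk : 0 < α * k + 1 := by positivity
  calc ∫ x in Ioi 0, exp (-s * x) * mittagLefflerTerm α z x k
      = z ^ k / Gamma (α * k + 1) * ∫ x in Ioi 0, x ^ (α * k + 1 - 1) * exp (-(s * x)) := by
        rw [← integral_const_mul]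
        refine setIntegral_congr_fun measurableSet_Ioi fun x hx ↦ ?_
        rw [mittagLefflerTerm.eq_mul_rpow (le_of_lt hx), add_sub_cancel_right, neg_mul]
        ring
    _ = s⁻¹ * (z / s ^ α) ^ k := by
        rw [integral_rpow_mul_exp_neg_mul_Ioi hk hs, one_div, rpow_add (inv_pos.2 hs), rpow_one,
          rpow_mul (inv_nonneg.2 hs.le), rpow_natCast, inv_rpow hs.le]
        have := (Gamma_pos_of_pos hk).ne'
        field_simp
        ring

lemma norm_exp_neg_mul_mittagLefflerTerm (hα : 0 ≤ α) {x : ℝ} (hx : 0 ≤ x) (z : ℝ)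
    (k : ℕ) :
    ‖exp (-s * x) * mittagLefflerTerm α z x k‖ =
      exp (-s * x) * mittagLefflerTerm α |z| x k := by
  rw [norm_mul, norm_of_nonneg (exp_pos _).le, norm_eq_abs,
    mittagLefflerTerm.abs_eq hα hx]

theorem integral_exp_neg_mul_tsum_mittagLefflerTerm (hα : 0 ≤ α) (hs : 0 < s) {z : ℝ}
    (hz : |z| < s ^ α) :
    ∫ x in Ioi 0, exp (-s * x) * ∑' k, mittagLefflerTerm α z x k =
      s ^ (α - 1) / (s ^ α - z) := by
  have hsα : 0 < s ^ α := rpow_pos_of_pos hs α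
  have hratio : ‖z / s ^ α‖ < 1 := by
    rwa [norm_div, norm_eq_abs, norm_of_nonneg hsα.le, div_lt_one hsα]
  have hnorm (k : ℕ) : ∫ x in Ioi 0, ‖exp (-s * x) * mittagLefflerTerm α z x k‖
      = s⁻¹ * (|z| / s ^ α) ^ k := by
    rw [← integral_exp_neg_mul_mittagLefflerTerm hα hs |z| k]
    exact setIntegral_congr_fun measurableSet_Ioi
      fun x hx ↦ norm_exp_neg_mul_mittagLefflerTerm hα (le_of_lt hx) z k
  have hsummable :
      Summable fun k : ℕ ↦ ∫ x in Ioi 0, ‖exp (-s * x) * mittagLefflerTerm α z x k‖ := by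
    simp_rw [hnorm]
    refine (summable_geometric_of_lt_one (by positivity) ?_).mul_left _
    rwa [← norm_eq_abs, ← norm_of_nonneg hsα.le, ← norm_div]
  simp_rw [← tsum_mul_left]
  rw [← integral_tsum_of_summable_integral_norm
      (integrableOn_exp_neg_mul_mittagLefflerTerm hα hs z) hsummable]
  simp_rw [integral_exp_neg_mul_mittagLefflerTerm hα hs z]
  rw [tsum_mul_left, tsum_geometric_of_norm_lt_one hratio, rpow_sub_one hs.ne']
  have : s ^ α - z ≠ 0 := by linarith [le_abs_self z]
  field_simp

end Laplace

theorem laplace_transform_mittagLeffler_general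
    (α l : ℝ) (hα : 0 < α) (hl : 0 < l)
    (f : ℝ → ℝ)
    (hf : ∀ x : ℝ, 0 ≤ x → f x = ∑' k : ℕ, (-l * x ^ α) ^ k / Real.Gamma (α * k + 1)) :
    ∀ s : ℝ, l ^ (1 / α) < s →
      ∫ x in Set.Ioi (0:ℝ), Real.exp (-s * x) * f x = s ^ (α - 1) / (l + s ^ α) := by
  intro s hs
  have hs0 : 0 < s := (rpow_nonneg hl.le _).trans_lt hs
  have hls : l < s ^ α := by
    simpa [← rpow_mul hl.le, hα.ne'] using rpow_lt_rpow (rpow_nonneg hl.le _) hs hα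
  calc ∫ x in Ioi 0, exp (-s * x) * f x
      = ∫ x in Ioi 0, exp (-s * x) * ∑' k, mittagLefflerTerm α (-l) x k :=
        setIntegral_congr_fun measurableSet_Ioi fun x hx ↦ by
          rw [hf x (le_of_lt hx)]; rfl
    _ = s ^ (α - 1) / (l + s ^ α) := by
        rw [integral_exp_neg_mul_tsum_mittagLefflerTerm hα.le hs0
          (by rwa [abs_neg, abs_of_pos hl]), sub_neg_eq_add, add_comm]

theorem laplace_transform_mittagLeffler
    (α l : ℝ) (hα : 0 < α) (hα1 : α < 1) (hl : 0 < l)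
    (f : ℝ → ℝ)
    (hf : ∀ x : ℝ, 0 ≤ x → f x = ∑' k : ℕ, (-l * x ^ α) ^ k / Real.Gamma (α * k + 1)) :
    ∀ s : ℝ, l ^ (1 / α) < s →
      ∫ x in Set.Ioi (0:ℝ), Real.exp (-s * x) * f x = s ^ (α - 1) / (l + s ^ α) :=
  laplace_transform_mittagLeffler_general α l hα hl f hf
end

section
/- Let α ∈ (0,1) and let h(u,t) be a nonnegative kernel with ∫₀^∞ h(u,t) du = 1 for each t > 0 and ∫₀^∞ e^{-st} h(u,t) dt = s^{α-1} e^{-u s^α}. Suppose φ₁ : (0,∞) → [0,1] is measurable with Laplace transform Φ(s) = ∫₀^∞ e^{-su} φ₁(u) du = (1/s) ∏_{i=0}^{n-1} c_i/(s + c_i), where c_0, …, c_{n-1} > 0. Then φ_α(t) := ∫₀^∞ φ₁(u) h(u,t) du has Laplace transform ∫₀^∞ e^{-st} φ_α(t) dt = (1/s) ∏_{i=0}^{n-1} c_i/(s^α + c_i). -/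
/-!
Since `h(·, t)` is a probability density and `0 ≤ φ₁ ≤ 1`, the function
`(t, u) ↦ e^{-st} φ₁(u) h(u, t)` is integrable on `(0, ∞)²`, dominated by `e^{-st}`. Fubini then
turns the Laplace transform of `φ_α` into `∫ φ₁(u) (∫ e^{-st} h(u, t) dt) du
= s^{α-1} ∫ e^{-s^α u} φ₁(u) du = s^{α-1} Φ(s^α)`, and `s^{α-1} / s^α = 1 / s`.
-/

open MeasureTheory Real

section DensityKernel

variable {X Y : Type*} [MeasurableSpace X] [MeasurableSpace Y] {μ : Measure X} {ν : Measure Y}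
  {k : X → Y → ℝ} {φ : X → ℝ} {g : Y → ℝ} {C : ℝ}

lemma integral_norm_mul_le_of_integral_eq_one {f : X → ℝ} (hf_nonneg : 0 ≤ᵐ[μ] f)
    (hf_one : ∫ x, f x ∂μ = 1) (hφ_meas : AEStronglyMeasurable φ μ)
    (hφ_bound : ∀ᵐ x ∂μ, ‖φ x‖ ≤ C) :
    ∫ x, ‖φ x * f x‖ ∂μ ≤ C := by
  have hf_int : Integrable f μ := .of_integral_ne_zero (by simp [hf_one])
  calc ∫ x, ‖φ x * f x‖ ∂μ ≤ ∫ x, C * f x ∂μ := by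
        refine integral_mono_ae (hf_int.bdd_mul hφ_meas hφ_bound).norm
          (hf_int.const_mul C) ?_
        filter_upwards [hf_nonneg, hφ_bound] with x hfx hφx
        rw [norm_mul, Real.norm_of_nonneg hfx]
        exact mul_le_mul_of_nonneg_right hφx hfx
    _ = C := by rw [integral_const_mul, hf_one, mul_one]

variable [SFinite μ]

lemma integrable_prod_mul_kernel (hk_meas : Measurable (Function.uncurry k))
    (hk_nonneg : ∀ᵐ y ∂ν, ∀ᵐ x ∂μ, 0 ≤ k x y) (hk_one : ∀ᵐ y ∂ν, ∫ x, k x y ∂μ = 1)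
    (hφ_meas : Measurable φ) (hφ_bound : ∀ᵐ x ∂μ, ‖φ x‖ ≤ C)
    (hg_meas : Measurable g) (hg_int : Integrable g ν) :
    Integrable (fun p : Y × X => g p.1 * (φ p.2 * k p.2 p.1)) (ν.prod μ) := by
  have hF_meas : Measurable (fun p : Y × X => g p.1 * (φ p.2 * k p.2 p.1)) :=
    (hg_meas.comp measurable_fst).mul
      ((hφ_meas.comp measurable_snd).mul (hk_meas.comp measurable_swap))
  refine (integrable_prod_iff hF_meas.aestronglyMeasurable).mpr ⟨?_, ?_⟩
  · filter_upwards [hk_one] with y hy_one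
    have hk_int : Integrable (k · y) μ := .of_integral_ne_zero (by simp [hy_one])
    exact (hk_int.bdd_mul hφ_meas.aestronglyMeasurable hφ_bound).const_mul (g y)
  · refine (hg_int.norm.const_mul C).mono'
      (hF_meas.norm.stronglyMeasurable.integral_prod_right').aestronglyMeasurable ?_
    filter_upwards [hk_nonneg, hk_one] with y hy_nonneg hy_one
    have hy_le := integral_norm_mul_le_of_integral_eq_one hy_nonneg hy_one
      hφ_meas.aestronglyMeasurable hφ_bound
    calc ‖∫ x, ‖g y * (φ x * k x y)‖ ∂μ‖ = ‖g y‖ * ∫ x, ‖φ x * k x y‖ ∂μ := by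
          rw [Real.norm_of_nonneg (integral_nonneg fun _ => norm_nonneg _), ← integral_const_mul]
          simp only [norm_mul]
      _ ≤ ‖g y‖ * C := mul_le_mul_of_nonneg_left hy_le (norm_nonneg _)
      _ = C * ‖g y‖ := mul_comm _ _

lemma integral_mul_integral_kernel_comm [SFinite ν] (hk_meas : Measurable (Function.uncurry k))
    (hk_nonneg : ∀ᵐ y ∂ν, ∀ᵐ x ∂μ, 0 ≤ k x y) (hk_one : ∀ᵐ y ∂ν, ∫ x, k x y ∂μ = 1)
    (hφ_meas : Measurable φ) (hφ_bound : ∀ᵐ x ∂μ, ‖φ x‖ ≤ C)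
    (hg_meas : Measurable g) (hg_int : Integrable g ν) :
    ∫ y, g y * ∫ x, φ x * k x y ∂μ ∂ν = ∫ x, φ x * ∫ y, g y * k x y ∂ν ∂μ := by
  calc ∫ y, g y * ∫ x, φ x * k x y ∂μ ∂ν = ∫ y, ∫ x, g y * (φ x * k x y) ∂μ ∂ν := by
        simp only [integral_const_mul]
    _ = ∫ x, ∫ y, g y * (φ x * k x y) ∂ν ∂μ :=
        integral_integral_swap
          (integrable_prod_mul_kernel hk_meas hk_nonneg hk_one hφ_meas hφ_bound hg_meas hg_int)
    _ = ∫ x, φ x * ∫ y, g y * k x y ∂ν ∂μ := by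
        simp only [mul_left_comm _ (φ _), integral_const_mul]

end DensityKernel

theorem time_changed_arrival_laplace_general
    (α : ℝ)
    (h : ℝ → ℝ → ℝ) (hmeas : Measurable (Function.uncurry h))
    (hnonneg : ∀ u t, 0 < u → 0 < t → 0 ≤ h u t)
    (hdens : ∀ t : ℝ, 0 < t → ∫ u in Set.Ioi (0:ℝ), h u t = 1)
    (hlap : ∀ s u : ℝ, 0 < s → 0 < u →
      ∫ t in Set.Ioi (0:ℝ), Real.exp (-s * t) * h u t = s ^ (α - 1) * Real.exp (-u * s ^ α))
    (n : ℕ) (c : ℕ → ℝ)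
    (φ : ℝ → ℝ) (hφmeas : Measurable φ)
    (hφ01 : ∀ u : ℝ, 0 < u → φ u ∈ Set.Icc (0:ℝ) 1)
    (hΦ : ∀ s : ℝ, 0 < s →
      ∫ u in Set.Ioi (0:ℝ), Real.exp (-s * u) * φ u =
        (1 / s) * ∏ i ∈ Finset.range n, c i / (s + c i)) :
    ∀ s : ℝ, 0 < s →
      ∫ t in Set.Ioi (0:ℝ), Real.exp (-s * t) * (∫ u in Set.Ioi (0:ℝ), φ u * h u t) =
        (1 / s) * ∏ i ∈ Finset.range n, c i / (s ^ α + c i) := by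
  intro s hs
  have h_pos : ∀ᵐ x ∂(volume.restrict (Set.Ioi (0:ℝ))), 0 < x :=
    ae_restrict_mem measurableSet_Ioi
  have hφ_bound : ∀ᵐ u ∂(volume.restrict (Set.Ioi (0:ℝ))), ‖φ u‖ ≤ 1 := by
    filter_upwards [h_pos] with u hu
    rw [Real.norm_of_nonneg (hφ01 u hu).1]
    exact (hφ01 u hu).2
  rw [integral_mul_integral_kernel_comm hmeas
    (by filter_upwards [h_pos] with t ht; filter_upwards [h_pos] with u hu; exact hnonneg u t hu ht)
    (by filter_upwards [h_pos] with t ht; exact hdens t ht)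
    hφmeas hφ_bound (by fun_prop) (exp_neg_integrableOn_Ioi 0 hs)]
  calc ∫ u in Set.Ioi 0, φ u * ∫ t in Set.Ioi 0, exp (-s * t) * h u t
      = ∫ u in Set.Ioi 0, s ^ (α - 1) * (exp (-s ^ α * u) * φ u) :=
        setIntegral_congr_fun measurableSet_Ioi fun u hu => by
          rw [hlap s u hs hu, show -u * s ^ α = -s ^ α * u by ring]; ring
    _ = s ^ (α - 1) * ((1 / s ^ α) * ∏ i ∈ Finset.range n, c i / (s ^ α + c i)) := by
        rw [integral_const_mul, hΦ _ (rpow_pos_of_pos hs α)]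
    _ = (1 / s) * ∏ i ∈ Finset.range n, c i / (s ^ α + c i) := by
        rw [rpow_sub hs, rpow_one, ← mul_assoc]
        field_simp

theorem time_changed_arrival_laplace
    (α : ℝ) (hα : 0 < α) (hα1 : α < 1)
    (h : ℝ → ℝ → ℝ) (hmeas : Measurable (Function.uncurry h))
    (hnonneg : ∀ u t, 0 < u → 0 < t → 0 ≤ h u t)
    (hdens : ∀ t : ℝ, 0 < t → ∫ u in Set.Ioi (0:ℝ), h u t = 1)
    (hlap : ∀ s u : ℝ, 0 < s → 0 < u →
      ∫ t in Set.Ioi (0:ℝ), Real.exp (-s * t) * h u t = s ^ (α - 1) * Real.exp (-u * s ^ α))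
    (n : ℕ) (c : ℕ → ℝ) (hc : ∀ i ∈ Finset.range n, 0 < c i)
    (φ : ℝ → ℝ) (hφmeas : Measurable φ)
    (hφ01 : ∀ u : ℝ, 0 < u → φ u ∈ Set.Icc (0:ℝ) 1)
    (hΦ : ∀ s : ℝ, 0 < s →
      ∫ u in Set.Ioi (0:ℝ), Real.exp (-s * u) * φ u =
        (1 / s) * ∏ i ∈ Finset.range n, c i / (s + c i)) :
    ∀ s : ℝ, 0 < s →
      ∫ t in Set.Ioi (0:ℝ), Real.exp (-s * t) * (∫ u in Set.Ioi (0:ℝ), φ u * h u t) =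
        (1 / s) * ∏ i ∈ Finset.range n, c i / (s ^ α + c i) :=
  time_changed_arrival_laplace_general α h hmeas hnonneg hdens hlap n c φ hφmeas hφ01 hΦ
end
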